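/- For every 0 ≤ r ≤ m, the distribution of the stochastic rank statistic satisfies P(R = r) = Σ_{x ∈ T} H(x, m, r) · q(x), where, writing p̃(x) := Σ_{x' ≺ x} p(x'): if p(x) = 0 then H(x,m,r) = C(m,r) p̃(x)^r (1 − p̃(x))^{m−r}; if p(x) = 1 then H(x,m,r) = 1/(m+1); and if 0 < p(x) < 1 then H(x,m,r) = Σ_{e=0}^{m} [ Σ_{j=0}^{e} C(m−e, r−j) ( p̃(x)/(1−p(x)) )^{r−j} ( 1 − p̃(x)/(1−p(x)) )^{(m−e)−(r−j)} · 1/(e+1) ] · C(m,e) p(x)^e (1−p(x))^{m−e}, where C(n,k) denotes the binomial coefficient (taken to be 0 when k < 0 or k > n). -/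

import Mathlib

/-
Conditionally on `(X₀, U₀) = (x, u)`, the `m` summands of `R` are i.i.d. Bernoulli with
success probability `p̃(x) + p(x) u`, so `P(R = r)` is the binomial probability integrated
against `q ⊗ Unif[0,1]`. For fixed `x`, write `p̃(x) + p(x) u = p(x) u + (1 - p(x)) c` with
`c = p̃(x) / (1 - p(x))`: the binomial probability splits according to the number
`e ~ Bin(m, p(x))` of ties with `x` and the number `j ~ Bin(e, u)` of ties won, and integrating
out `u` turns the law of `j` into the uniform weight `1 / (e + 1)` (a Beta integral).
-/

open MeasureTheory ProbabilityTheory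
open scoped ENNReal

noncomputable section

/-- The uniform distribution on the interval `[0,1]`. -/
def unifIcc : Measure ℝ := volume.restrict (Set.Icc 0 1)

/-- The setup of the stochastic rank statistic: on a common probability space `(Ω, μ)`,
`X 0` has distribution `q`, the `X i` for `i ≠ 0` have distribution `p`, the `U i` are
uniform on `[0,1]`, and all of `X 0, …, X m, U 0, …, U m` are mutually independent.
(Mutual independence of the `2(m+1)` variables is recorded by independence of the pairs
`(X i, U i)` together with each pair having the product law.) -/
def IsRankSetup {T : Type} [MeasurableSpace T] {Ω : Type} [MeasurableSpace Ω]
    (μ : Measure Ω) (p q : Measure T) (m : ℕ)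
    (X : Fin (m + 1) → Ω → T) (U : Fin (m + 1) → Ω → ℝ) : Prop :=
  (∀ i, Measurable (X i)) ∧ (∀ i, Measurable (U i)) ∧
  iIndepFun (fun i ω => (X i ω, U i ω)) μ ∧
  μ.map (fun ω => (X 0 ω, U 0 ω)) = q.prod unifIcc ∧
  ∀ i : Fin (m + 1), i ≠ 0 → μ.map (fun ω => (X i ω, U i ω)) = p.prod unifIcc

open scoped Classical in
/-- The stochastic rank statistic
`R = ∑_{j=1}^m (1[X j ≺ X 0] + 1[X j = X 0 ∧ U j < U 0])`. -/
def rankStat {T : Type} {Ω : Type} (r : T → T → Prop) (m : ℕ)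
    (X : Fin (m + 1) → Ω → T) (U : Fin (m + 1) → Ω → ℝ) (ω : Ω) : ℕ :=
  ∑ j : Fin m, ((if r (X j.succ ω) (X 0 ω) then 1 else 0) +
    (if X j.succ ω = X 0 ω ∧ U j.succ ω < U 0 ω then 1 else 0))

/-- The left-open cumulative distribution function `p̃ x = ∑_{y ≺ x} p y`. -/
def cdfBelow {T : Type} (p : PMF T) (r : T → T → Prop) (x : T) : ℝ≥0∞ :=
  ∑' y : {y : T // r y x}, p y

open scoped Classical in
/-- The function `H(x, m, rk)` appearing in the exact sampling distribution of the
stochastic rank statistic.  Binomial coefficients `C(n, k)` are taken to be `0` when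
`k < 0` or `k > n` (the case `k < 0`, i.e. `j > rk`, is handled by an `if`). -/
def Hfun {T : Type} (p : PMF T) (r : T → T → Prop) (m rk : ℕ) (x : T) : ℝ≥0∞ :=
  if p x = 0 then
    (Nat.choose m rk : ℝ≥0∞) * (cdfBelow p r x) ^ rk * (1 - cdfBelow p r x) ^ (m - rk)
  else if p x = 1 then ((m : ℝ≥0∞) + 1)⁻¹
  else
    ∑ e ∈ Finset.range (m + 1),
      (∑ j ∈ Finset.range (e + 1),
          (if j ≤ rk then
              (Nat.choose (m - e) (rk - j) : ℝ≥0∞)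
                * (cdfBelow p r x / (1 - p x)) ^ (rk - j)
                * (1 - cdfBelow p r x / (1 - p x)) ^ ((m - e) - (rk - j))
            else 0) * ((e : ℝ≥0∞) + 1)⁻¹)
        * (Nat.choose m e : ℝ≥0∞) * (p x) ^ e * (1 - p x) ^ (m - e)

open Polynomial in
theorem Polynomial.coeff_C_mul_X_add_C_pow {R : Type*} [CommSemiring R] (a b : R) (n k : ℕ) :
    ((C a * X + C b) ^ n).coeff k = n.choose k * a ^ k * b ^ (n - k) := by
  have hterm (i : ℕ) : (C a * X) ^ i * C b ^ (n - i) * (n.choose i : R[X]) =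
      C (n.choose i * a ^ i * b ^ (n - i)) * X ^ i := by
    simp only [mul_pow, ← C_pow, ← map_natCast C, map_mul]; ring
  simp only [add_pow, finsetSum_coeff, hterm, coeff_C_mul_X_pow, Finset.sum_ite_eq,
    Finset.mem_range]
  split_ifs
  · rfl
  · simp [Nat.choose_eq_zero_of_lt (by omega : n < k)]

open Finset in
/-- Both sides are the coefficient of `X ^ k` in `(b (u X + u') + b' (c X + c')) ^ m`. -/
theorem choose_mul_add_pow_mul_add_pow {R : Type*} [CommSemiring R] (b b' c c' u u' : R)
    (m k : ℕ) :
    (m.choose k : R) * (b * u + b' * c) ^ k * (b * u' + b' * c') ^ (m - k) =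
      ∑ e ∈ range (m + 1),
        (∑ j ∈ range (e + 1),
          (if j ≤ k then ((m - e).choose (k - j) : R) * c ^ (k - j) * c' ^ ((m - e) - (k - j))
            else 0) * (e.choose j * u ^ j * u' ^ (e - j)))
        * m.choose e * b ^ e * b' ^ (m - e) := by
  open Polynomial in
  have hsplit : C (b * u + b' * c) * X + C (b * u' + b' * c') =
      C b * (C u * X + C u') + C b' * (C c * X + C c') := by
    simp only [map_add, map_mul]; ring
  rw [← coeff_C_mul_X_add_C_pow, hsplit, add_pow, finsetSum_coeff]
  refine sum_congr rfl fun e _ => ?_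
  have hcoeff : ((C b * (C u * X + C u')) ^ e * (C b' * (C c * X + C c')) ^ (m - e) *
      (m.choose e : R[X])).coeff k = (m.choose e * b ^ e * b' ^ (m - e)) *
      ((C u * X + C u') ^ e * (C c * X + C c') ^ (m - e)).coeff k := by
    rw [← coeff_C_mul]
    congr 1
    simp only [mul_pow, ← C_pow, ← map_natCast C, map_mul]; ring
  rw [hcoeff, coeff_mul, Nat.sum_antidiagonal_eq_sum_range_succ_mk, mul_comm, ← mul_assoc,
    ← mul_assoc]
  congr 3
  simp only [coeff_C_mul_X_add_C_pow, ite_mul, zero_mul, ← sum_filter]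
  refine (sum_subset (fun j => by simp only [mem_filter, mem_range]; omega)
    fun j hjk hje => ?_).symm.trans (sum_congr rfl fun j _ => by ring)
  simp only [mem_filter, mem_range] at hjk hje
  simp [Nat.choose_eq_zero_of_lt (by omega : e < j)]

theorem ENNReal.mul_one_sub_add_one_sub_mul_one_sub_div {s t v : ℝ≥0∞} (hst : s + t ≤ 1)
    (ht : t < 1) (hv : v ≤ 1) :
    t * (1 - v) + (1 - t) * (1 - s / (1 - t)) = 1 - (s + t * v) := by
  have ht₀ : 1 - t ≠ 0 := (tsub_pos_of_lt ht).ne'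
  have hs : s ≤ 1 - t := ENNReal.le_sub_of_add_le_right ht.ne_top hst
  have hs_top : s ≠ ∞ := ne_top_of_le_ne_top one_ne_top (le_of_add_le_left hst)
  have hv_top : v ≠ ∞ := ne_top_of_le_ne_top one_ne_top hv
  rw [ENNReal.mul_sub fun _ _ => ht.ne_top, ENNReal.mul_sub fun _ _ => by finiteness, mul_one,
    mul_one, ENNReal.mul_div_cancel ht₀ (by finiteness)]
  refine ENNReal.eq_sub_of_add_eq (by finiteness) ?_
  calc t - t * v + (1 - t - s) + (s + t * v)
      = (t - t * v + t * v) + (1 - t - s + s) := by ring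
    _ = 1 := by
      rw [tsub_add_cancel_of_le (mul_le_of_le_one_right' hv), tsub_add_cancel_of_le hs,
        add_tsub_cancel_of_le ht.le]

section Uniform

open Set

instance : IsProbabilityMeasure unifIcc :=
  ⟨by simp [unifIcc, Real.volume_Icc]⟩

theorem unifIcc_Iio {u : ℝ} (hu : u ∈ Icc 0 1) : unifIcc (Iio u) = ENNReal.ofReal u := by
  have : Iio u ∩ Icc 0 1 = Ico 0 u := by
    ext v; simp only [mem_inter_iff, mem_Iio, mem_Icc, mem_Ico]; grind
  rw [unifIcc, Measure.restrict_apply measurableSet_Iio, this, Real.volume_Ico, sub_zero]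

theorem measurable_unifIcc_Iio : Measurable fun u : ℝ => unifIcc (Iio u) :=
  Monotone.measurable fun _ _ h => measure_mono (Iio_subset_Iio h)

theorem one_div_beta_nat_add_one {n j : ℕ} (hj : j ≤ n) :
    1 / beta (j + 1) ((n - j : ℕ) + 1) = (n + 1) * n.choose j := by
  have hsum : (j : ℝ) + 1 + ((n - j : ℕ) + 1) = (n + 1 : ℕ) + 1 := by push_cast [hj]; ring
  rw [beta, hsum]
  simp only [Real.Gamma_nat_eq_factorial, Nat.factorial_succ]
  rw [← Nat.choose_mul_factorial_mul_factorial hj]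
  push_cast
  field_simp

theorem lintegral_unifIcc_choose_mul_pow {n j : ℕ} (hj : j ≤ n) :
    ∫⁻ u, n.choose j * unifIcc (Iio u) ^ j * (1 - unifIcc (Iio u)) ^ (n - j) ∂unifIcc =
      ((n : ℝ≥0∞) + 1)⁻¹ := by
  have hbeta := lintegral_betaPDF_eq_one (α := j + 1) (β := (n - j : ℕ) + 1) (by positivity)
    (by positivity)
  rw [lintegral_betaPDF, one_div_beta_nat_add_one hj] at hbeta
  refine ENNReal.eq_inv_of_mul_eq_one_left (Eq.trans ?_ hbeta)
  have hIoo (f : ℝ → ℝ≥0∞) : ∫⁻ u, f u ∂unifIcc = ∫⁻ u in Ioo 0 1, f u :=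
    setLIntegral_congr Ioo_ae_eq_Icc.symm
  rw [mul_comm, ← lintegral_const_mul' _ _ (by finiteness), hIoo]
  refine setLIntegral_congr_fun measurableSet_Ioo fun u hu => ?_
  have hu' : u ∈ Icc 0 1 := Ioo_subset_Icc_self hu
  have h1u : 0 ≤ 1 - u := sub_nonneg.2 hu'.2
  simp only [unifIcc_Iio hu', add_sub_cancel_right, Real.rpow_natCast]
  rw [ENNReal.ofReal_mul (mul_nonneg (by positivity) (pow_nonneg hu'.1 _)),
    ENNReal.ofReal_mul (by positivity), ENNReal.ofReal_mul (by positivity),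
    ENNReal.ofReal_pow hu'.1, ENNReal.ofReal_pow h1u, ENNReal.ofReal_sub _ hu'.1,
    ENNReal.ofReal_one, ENNReal.ofReal_add (by positivity) zero_le_one]
  simp only [ENNReal.ofReal_natCast, ENNReal.ofReal_one, mul_assoc]

end Uniform

open Finset in
open scoped Classical in
theorem MeasureTheory.Measure.pi_card_filter_mem_eq {α : Type*} [MeasurableSpace α]
    (κ : Measure α) [IsProbabilityMeasure κ] {A : Set α} (hA : MeasurableSet A) (n k : ℕ) :
    Measure.pi (fun _ : Fin n => κ) {w | #{j | w j ∈ A} = k} =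
      n.choose k * κ A ^ k * (1 - κ A) ^ (n - k) := by
  set hits : (Fin n → α) → Finset (Fin n) := fun w => {j | w j ∈ A}
  have hfiber (s : Finset (Fin n)) :
      hits ⁻¹' {s} = Set.univ.pi fun j => if j ∈ s then A else Aᶜ := by
    ext w
    simp only [Set.mem_preimage, Set.mem_singleton_iff, Finset.ext_iff, Set.mem_pi,
      hits, mem_filter, mem_univ]
    refine forall_congr' fun j => ?_
    split_ifs with hj <;> simp [hj]
  have hevent : {w | #(hits w) = k} = hits ⁻¹' ↑(powersetCard k (univ : Finset (Fin n))) := by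
    ext w; simp
  have hmeas (s : Finset (Fin n)) : MeasurableSet (hits ⁻¹' {s}) := by
    rw [hfiber]
    exact .univ_pi fun j => by split_ifs; exacts [hA, hA.compl]
  rw [hevent, ← sum_measure_preimage_singleton _ fun s _ => hmeas s]
  have hbox (s : Finset (Fin n)) :
      Measure.pi (fun _ : Fin n => κ) (hits ⁻¹' {s}) = κ A ^ #s * (1 - κ A) ^ (n - #s) := by
    rw [hfiber, Measure.pi_pi]
    have hcompl : ({j | j ∉ s} : Finset (Fin n)) = sᶜ := by ext; simp
    simp [apply_ite κ, prob_compl_eq_one_sub hA, prod_ite, hcompl, card_compl]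
  rw [Finset.sum_congr rfl fun s hs => by rw [hbox, (mem_powersetCard.1 hs).2], sum_const,
    card_powersetCard, card_univ, Fintype.card_fin, nsmul_eq_mul, mul_assoc]

open Finset in
open scoped Classical in
theorem measurableSet_card_filter_mem {α β : Type*} [MeasurableSpace α] [MeasurableSpace β]
    {S : Set (α × β)} (hS : MeasurableSet S) (m k : ℕ) :
    MeasurableSet {z : α × (Fin m → β) | #{j | (z.1, z.2 j) ∈ S} = k} := by
  have hmem (j : Fin m) : MeasurableSet {z : α × (Fin m → β) | (z.1, z.2 j) ∈ S} :=
    (measurable_fst.prodMk ((measurable_pi_apply j).comp measurable_snd)) hS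
  have hcount : Measurable fun z : α × (Fin m → β) => #{j | (z.1, z.2 j) ∈ S} := by
    simp_rw [card_filter]
    exact measurable_sum _ fun j _ => Measurable.ite (hmem j) measurable_const measurable_const
  exact hcount (measurableSet_singleton k)

theorem IsRankSetup.map_eq_prod {T : Type} [MeasurableSpace T] {Ω : Type} [MeasurableSpace Ω]
    {μ : Measure Ω} [IsProbabilityMeasure μ] {p q : Measure T} {m : ℕ}
    {X : Fin (m + 1) → Ω → T} {U : Fin (m + 1) → Ω → ℝ} (h : IsRankSetup μ p q m X U) :
    μ.map (fun ω => ((X 0 ω, U 0 ω), fun j : Fin m => (X j.succ ω, U j.succ ω))) =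
      (q.prod unifIcc).prod (Measure.pi fun _ : Fin m => p.prod unifIcc) := by
  obtain ⟨hX, hU, hindep, hlaw₀, hlaw⟩ := h
  have hZ (i : Fin (m + 1)) : Measurable fun ω => (X i ω, U i ω) := (hX i).prodMk (hU i)
  have hpi := (iIndepFun_iff_map_fun_eq_pi_map fun i => (hZ i).aemeasurable).1 hindep
  have hsplit :=
    (measurePreserving_piFinSuccAbove (fun i => μ.map fun ω => (X i ω, U i ω)) 0).map_eq
  rw [← hpi, Measure.map_map (MeasurableEquiv.measurable _) (measurable_pi_lambda _ hZ)] at hsplit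
  simp only [Fin.zero_succAbove] at hsplit
  rw [← hlaw₀, ← funext fun j : Fin m => hlaw j.succ j.succ_ne_zero]
  exact hsplit

section PMF

variable {T : Type} [MeasurableSpace T] [MeasurableSingletonClass T] (p : PMF T)
  (r : T → T → Prop)

theorem cdfBelow_eq_toMeasure (x : T) : cdfBelow p r x = p.toMeasure {y | r y x} := by
  rw [PMF.toMeasure_apply_eq_tsum, cdfBelow, ← tsum_subtype {y | r y x} p]
  rfl

variable [Std.Irrefl r]

theorem cdfBelow_add_le_one (x : T) : cdfBelow p r x + p x ≤ 1 := by
  have hdisj : Disjoint {y | r y x} {x} := Set.disjoint_singleton_right.2 (irrefl x)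
  rw [cdfBelow_eq_toMeasure, ← PMF.toMeasure_apply_singleton p x (measurableSet_singleton x),
    ← measure_union hdisj (measurableSet_singleton x)]
  exact prob_le_one

theorem cdfBelow_eq_zero_of_apply_eq_one {x : T} (hx : p x = 1) : cdfBelow p r x = 0 := by
  have h := cdfBelow_add_le_one p r x
  rw [hx] at h
  exact nonpos_iff_eq_zero.1
    (ENNReal.le_of_add_le_add_right ENNReal.one_ne_top (by simpa using h))

end PMF

open Finset in
theorem lintegral_binomial_eq_Hfun {T : Type} [MeasurableSpace T] [MeasurableSingletonClass T]
    (p : PMF T) (r : T → T → Prop) [Std.Irrefl r] {m rk : ℕ} (hrk : rk ≤ m) (x : T) :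
    ∫⁻ u, m.choose rk * (cdfBelow p r x + p x * unifIcc (Set.Iio u)) ^ rk *
        (1 - (cdfBelow p r x + p x * unifIcc (Set.Iio u))) ^ (m - rk) ∂unifIcc =
      Hfun p r m rk x := by
  unfold Hfun
  split_ifs with ht₀ ht₁
  · simp [ht₀]
  · simpa [cdfBelow_eq_zero_of_apply_eq_one p r ht₁, ht₁]
      using lintegral_unifIcc_choose_mul_pow hrk
  have hst := cdfBelow_add_le_one p r x
  have hlt : p x < 1 := lt_of_le_of_ne (p.coe_le_one x) ht₁
  generalize cdfBelow p r x = s at *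
  generalize p x = t at *
  have hprec (u : ℝ) :
      t * unifIcc (Set.Iio u) + (1 - t) * (s / (1 - t)) = s + t * unifIcc (Set.Iio u) := by
    rw [ENNReal.mul_div_cancel (tsub_pos_of_lt hlt).ne' (by finiteness), add_comm]
  have hsucc (u : ℝ) : t * (1 - unifIcc (Set.Iio u)) + (1 - t) * (1 - s / (1 - t)) =
      1 - (s + t * unifIcc (Set.Iio u)) :=
    ENNReal.mul_one_sub_add_one_sub_mul_one_sub_div hst hlt prob_le_one
  simp_rw [← hsucc, ← hprec, choose_mul_add_pow_mul_add_pow]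
  have hU := measurable_unifIcc_Iio
  rw [lintegral_finsetSum _ fun e _ => by fun_prop]
  refine sum_congr rfl fun e _ => ?_
  rw [lintegral_mul_const _ (by fun_prop), lintegral_mul_const _ (by fun_prop),
    lintegral_mul_const _ (by fun_prop), lintegral_finsetSum _ fun j _ => by fun_prop]
  congr 3
  refine sum_congr rfl fun j hj => ?_
  rw [lintegral_const_mul _ (by fun_prop),
    lintegral_unifIcc_choose_mul_pow (Nat.lt_succ_iff.1 (mem_range.1 hj))]

section Rank

variable {T : Type}

def precSet (r : T → T → Prop) (x : T) (u : ℝ) : Set (T × ℝ) :=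
  {z | r z.1 x ∨ z.1 = x ∧ z.2 < u}

open Finset in
open scoped Classical in
theorem rankStat_eq_card_filter_mem_precSet (r : T → T → Prop) [Std.Irrefl r] {Ω : Type}
    {m : ℕ} (X : Fin (m + 1) → Ω → T) (U : Fin (m + 1) → Ω → ℝ) (ω : Ω) :
    rankStat r m X U ω =
      #{j : Fin m | (X j.succ ω, U j.succ ω) ∈ precSet r (X 0 ω) (U 0 ω)} := by
  rw [rankStat, card_filter]
  refine sum_congr rfl fun j _ => ?_
  by_cases hlt : r (X j.succ ω) (X 0 ω)
  · have htie : ¬(X j.succ ω = X 0 ω ∧ U j.succ ω < U 0 ω) := fun h =>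
      irrefl _ (h.1 ▸ hlt)
    simp [precSet, hlt, htie]
  · simp [precSet, hlt]

variable [MeasurableSpace T] [MeasurableSingletonClass T] (r : T → T → Prop)

theorem measurableSet_mem_precSet [Countable T] :
    MeasurableSet {z : (T × ℝ) × (T × ℝ) | z.2 ∈ precSet r z.1.1 z.1.2} := by
  have hT : Measurable fun z : (T × ℝ) × (T × ℝ) => (z.2.1, z.1.1) := by fun_prop
  refine (hT (Set.to_countable {y : T × T | r y.1 y.2}).measurableSet).union
    ((hT (Set.to_countable {y : T × T | y.1 = y.2}).measurableSet).inter
      (measurableSet_lt (f := fun z : (T × ℝ) × (T × ℝ) => z.2.2) (by fun_prop)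
        (by fun_prop)))

theorem measure_precSet [Std.Irrefl r] (p : PMF T) (x : T) (u : ℝ) :
    (p.toMeasure.prod unifIcc) (precSet r x u) =
      cdfBelow p r x + p x * unifIcc (Set.Iio u) := by
  have hunion : precSet r x u = {y | r y x} ×ˢ Set.univ ∪ {x} ×ˢ Set.Iio u := by
    ext ⟨y, v⟩; simp [precSet]
  have hdisj : Disjoint ({y | r y x} ×ˢ (Set.univ : Set ℝ)) ({x} ×ˢ Set.Iio u) :=
    Set.disjoint_prod.2 (Or.inl (Set.disjoint_singleton_right.2 (irrefl x)))
  rw [hunion, measure_union hdisj ((measurableSet_singleton x).prod measurableSet_Iio),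
    Measure.prod_prod, Measure.prod_prod, measure_univ, mul_one, cdfBelow_eq_toMeasure,
    PMF.toMeasure_apply_singleton _ _ (measurableSet_singleton x)]

end Rank

open Finset in
/-- **Theorem (exact sampling distribution under the alternative).** For every `0 ≤ rk ≤ m`,
`P(R = rk) = ∑_{x ∈ T} H(x, m, rk) ⬝ q(x)`. -/
theorem srs_distribution
    {T : Type} [Countable T] [MeasurableSpace T] [MeasurableSingletonClass T]
    (r : T → T → Prop) (hr : IsStrictTotalOrder T r) (p q : PMF T)
    (m : ℕ)
    (Ω : Type) (_ : MeasurableSpace Ω) (μ : Measure Ω) (hμ : IsProbabilityMeasure μ)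
    (X : Fin (m + 1) → Ω → T) (U : Fin (m + 1) → Ω → ℝ)
    (hsetup : IsRankSetup μ p.toMeasure q.toMeasure m X U) :
    ∀ rk : ℕ, rk ≤ m →
      μ {ω | rankStat r m X U ω = rk} = ∑' x : T, Hfun p r m rk x * q x := by
  classical
  intro rk hrk
  set ν := p.toMeasure.prod unifIcc
  set Φ := fun ω => ((X 0 ω, U 0 ω), fun j : Fin m => (X j.succ ω, U j.succ ω))
  set B := {z : (T × ℝ) × (Fin m → T × ℝ) | #{j | z.2 j ∈ precSet r z.1.1 z.1.2} = rk}
  have hB : MeasurableSet B := measurableSet_card_filter_mem (measurableSet_mem_precSet r) m rk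
  have hΦ : Measurable Φ := by
    obtain ⟨hX, hU, -⟩ := hsetup
    fun_prop
  have hevent : {ω | rankStat r m X U ω = rk} = Φ ⁻¹' B := by
    ext ω
    simp [rankStat_eq_card_filter_mem_precSet, Φ, B]
  have hsection (a : T × ℝ) : Measure.pi (fun _ : Fin m => ν) (Prod.mk a ⁻¹' B) =
      m.choose rk * (cdfBelow p r a.1 + p a.1 * unifIcc (Set.Iio a.2)) ^ rk *
        (1 - (cdfBelow p r a.1 + p a.1 * unifIcc (Set.Iio a.2))) ^ (m - rk) := by
    rw [← measure_precSet r p]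
    exact Measure.pi_card_filter_mem_eq _
      (measurable_prodMk_left (measurableSet_mem_precSet r)) m rk
  calc μ {ω | rankStat r m X U ω = rk}
      = (q.toMeasure.prod unifIcc).prod (Measure.pi fun _ : Fin m => ν) B := by
        rw [hevent, ← Measure.map_apply hΦ hB, hsetup.map_eq_prod]
    _ = ∫⁻ x, ∫⁻ u, Measure.pi (fun _ : Fin m => ν) (Prod.mk (x, u) ⁻¹' B) ∂unifIcc
          ∂q.toMeasure := by
        rw [Measure.prod_apply hB,
          lintegral_prod _ (measurable_measure_prodMk_left hB).aemeasurable]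
    _ = ∑' x : T, Hfun p r m rk x * q x := by
        simp_rw [hsection, lintegral_binomial_eq_Hfun p r hrk, lintegral_countable',
          PMF.toMeasure_apply_singleton _ _ (measurableSet_singleton _)]
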